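/- (Marchaud inequality) Let F ∈ C[a,b] and integers 1 ≤ ℓ < k. Then there exists a constant c depending only on k such that for all 0 < t ≤ b - a: ω_ℓ(F, t; [a,b]) ≤ c · t^ℓ · (∫_t^{b-a} ω_k(F, u; [a,b]) / u^{ℓ+1} du + ‖F‖_{[a,b]} / (b-a)^ℓ). -/

import Mathlib

open scoped BigOperators

open Classical in
/-- Divided difference with possibly repeated knots, via derivative data `F`
(`F j` is the `j`-th derivative). -/
noncomputable def divDiff (F : ℕ → ℝ → ℝ) : List ℝ → ℝ
  | [] => 0
  | [x] => F 0 x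
  | x :: y :: l =>
      if h : ∀ z ∈ y :: l, z = x then
        F ((y :: l).length) x / Nat.factorial ((y :: l).length)
      else
        (divDiff F (y :: l) -
          divDiff F (x :: (y :: l).eraseIdx ((y :: l).findIdx (fun z => z ≠ x)))) /
          ((y :: l).getD ((y :: l).findIdx (fun z => z ≠ x)) 0 - x)
termination_by l => l.length
decreasing_by
  · simp
  · push_neg at h
    obtain ⟨z, hz, hzx⟩ := h
    have hlt : (y :: l).findIdx (fun z => decide (z ≠ x)) < (y :: l).length :=
      List.findIdx_lt_length_of_exists ⟨z, hz, by simpa using hzx⟩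
    simp only [List.length_cons, List.length_eraseIdx] at *
    rw [if_pos hlt]; omega

/-- Newton form of the Hermite interpolation polynomial at the knots `xs`. -/
noncomputable def newtonSum (F : ℕ → ℝ → ℝ) (xs : List ℝ) (t : ℝ) : ℝ :=
  ∑ j ∈ Finset.range xs.length,
    divDiff F (xs.take (j + 1)) * ∏ i ∈ Finset.range j, (t - xs.getD i 0)

/-- The `k`-th symmetric difference of `g`, set to `0` when the relevant points
leave `[a,b]`. -/
noncomputable def kSymmDiff (k : ℕ) (g : ℝ → ℝ) (u x a b : ℝ) : ℝ :=
  if a ≤ x - (k / 2 : ℝ) * u ∧ x + (k / 2 : ℝ) * u ≤ b then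
    ∑ i ∈ Finset.range (k + 1), (-1 : ℝ) ^ i * (k.choose i) * g (x + ((k : ℝ) / 2 - i) * u)
  else 0

/-- The `k`-th modulus of smoothness of `g` on `[a,b]`. -/
noncomputable def smoothOmega (k : ℕ) (g : ℝ → ℝ) (t a b : ℝ) : ℝ :=
  sSup {v : ℝ | ∃ u x : ℝ, 0 < u ∧ u ≤ t ∧ v = |kSymmDiff k g u x a b|}

/-- First modulus of continuity of `g` on `[a,b]`. -/
noncomputable def omega1 (g : ℝ → ℝ) (t a b : ℝ) : ℝ :=
  sSup {v : ℝ | ∃ x y : ℝ, x ∈ Set.Icc a b ∧ y ∈ Set.Icc a b ∧ |x - y| ≤ t ∧ v = |g x - g y|}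

/-- Sup norm on `[a,b]`. -/
noncomputable def supNorm (g : ℝ → ℝ) (a b : ℝ) : ℝ :=
  sSup {v : ℝ | ∃ x ∈ Set.Icc a b, v = |g x|}

/-- The knots extended by `x₋₁ = x₀ - (xₘ - x₀)` and `x_{m+1} = xₘ + (xₘ - x₀)`. -/
noncomputable def xExt (m : ℕ) (x : ℕ → ℝ) : ℤ → ℝ := fun i =>
  if i < 0 then x 0 - (x m - x 0) else if (m : ℤ) < i then x m + (x m - x 0) else x i.toNat

/-- `d(p,q) = min (x_{q+1} - x_p) (x_q - x_{p-1})`. -/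
noncomputable def dpq (m : ℕ) (x : ℕ → ℝ) (p q : ℕ) : ℝ :=
  min (xExt m x ((q : ℤ) + 1) - x p) (x q - xExt m x ((p : ℤ) - 1))

/-- `Λ_{p,q,r}(x_0,…,x_m; φ)`. -/
noncomputable def Lam (m r : ℕ) (x : ℕ → ℝ) (φ : ℝ → ℝ) (p q : ℕ) : ℝ :=
  (∫ u in Set.Ioc (x q - x p) (dpq m x p q), u ^ ((p : ℤ) + r - q - 1) * φ u) /
    ((∏ i ∈ Finset.range p, (x q - x i)) * ∏ i ∈ Finset.Ioc q m, (x i - x p))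

/-- `Λ_r(x_0,…,x_m; φ) = max over admissible (p,q) of Λ_{p,q,r}`. -/
noncomputable def LamMax (m r : ℕ) (x : ℕ → ℝ) (φ : ℝ → ℝ) : ℝ :=
  sSup {v : ℝ | ∃ p q : ℕ, q ≤ m ∧ p + r + 1 ≤ q ∧ v = Lam m r x φ p q}

/-!
Writing `ω_j(s) = smoothOmega j F s a b`, the identity
`2^j Δ_h^j F(y) = Δ_{2h}^j F(y) - ∑_i C(j,i) ∑_{r<i} Δ_h^{j+1} F(y + r h)` gives
`ω_j(s)/s^j ≤ ω_j(2s)/(2s)^j + j ω_{j+1}(s)/s^j` whenever `3 j s ≤ b - a`: then every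
difference fits into `[a,b]`, if necessary after running it backwards. Telescoping along the
dyadic scales `2^n s` up to the first one beyond `(b - a)/(3j)`, where `ω_j ≤ 2^j ‖F‖` takes
over, bounds `ω_j(s)/s^j` by `‖F‖/(b-a)^j` plus `j ∑_n ω_{j+1}(2^n s)/(2^n s)^j`. Inserting
the inequality for `ω_{j+1}` (by descending induction from `j = k`, where it follows from the
monotonicity of `ω_k`) and exchanging the dyadic sum with the integral, using
`∑_{2^n s < u} 2^n s ≤ 2u`, gives it for `ω_j`.
-/

open Finset MeasureTheory

section FiniteDifferences

variable (f : ℝ → ℝ) (h : ℝ)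

theorem fwdDiff_iter_neg (n : ℕ) (x : ℝ) :
    (fwdDiff (-h))^[n] f x = (-1) ^ n * (fwdDiff h)^[n] f (x - n * h) := by
  induction n generalizing x with
  | zero => simp
  | succ n ih =>
    rw [Function.iterate_succ_apply', Function.iterate_succ_apply', fwdDiff, fwdDiff, ih, ih]
    have h₁ : x + -h - n * h = x - ↑(n + 1) * h := by push_cast; ring
    have h₂ : x - ↑(n + 1) * h + h = x - n * h := by push_cast; ring
    rw [h₁, h₂, pow_succ]
    ring

theorem fwdDiff_iter_add_nat_mul_sub (n i : ℕ) (x : ℝ) :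
    (fwdDiff h)^[n] f (x + i * h) - (fwdDiff h)^[n] f x =
      ∑ r ∈ range i, (fwdDiff h)^[n + 1] f (x + r * h) := by
  have := sum_range_sub (fun r : ℕ => (fwdDiff h)^[n] f (x + r * h)) i
  simp only [Nat.cast_zero, zero_mul, add_zero] at this
  rw [← this]
  refine sum_congr rfl fun r _ => ?_
  rw [Function.iterate_succ_apply', fwdDiff, Nat.cast_succ, add_one_mul, ← add_assoc]

theorem fwdDiff_iter_two_mul (n : ℕ) (x : ℝ) :
    (fwdDiff (2 * h))^[n] f x =
      ∑ i ∈ range (n + 1), (n.choose i : ℝ) * (fwdDiff h)^[n] f (x + i * h) := by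
  induction n generalizing x with
  | zero => simp
  | succ n ih =>
    rw [sum_choose_succ_mul (fun i _ => (fwdDiff h)^[n + 1] f (x + i * h)),
      ← sum_add_distrib, Function.iterate_succ_apply', fwdDiff, ih, ih, ← sum_sub_distrib]
    refine sum_congr rfl fun i _ => ?_
    simp only [Function.iterate_succ_apply', fwdDiff, Nat.cast_succ]
    ring_nf

theorem two_pow_mul_fwdDiff_iter (n : ℕ) (x : ℝ) :
    2 ^ n * (fwdDiff h)^[n] f x = (fwdDiff (2 * h))^[n] f x -
      ∑ i ∈ range (n + 1), (n.choose i : ℝ) * ∑ r ∈ range i, (fwdDiff h)^[n + 1] f (x + r * h) := by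
  simp only [← fwdDiff_iter_add_nat_mul_sub, mul_sub, sum_sub_distrib, fwdDiff_iter_two_mul,
    ← sum_mul]
  rw [← Nat.cast_sum, Nat.sum_range_choose]
  push_cast
  ring

end FiniteDifferences

theorem abs_sum_choose_mul_sum_le (j : ℕ) (T : ℕ → ℝ) {B : ℝ} (hB : 0 ≤ B)
    (hT : ∀ r < j, |T r| ≤ B) :
    |∑ i ∈ range (j + 1), (j.choose i : ℝ) * ∑ r ∈ range i, T r| ≤ j * 2 ^ j * B := by
  calc |∑ i ∈ range (j + 1), (j.choose i : ℝ) * ∑ r ∈ range i, T r|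
      ≤ ∑ i ∈ range (j + 1), (j.choose i : ℝ) * (j * B) := by
        refine (abs_sum_le_sum_abs _ _).trans (sum_le_sum fun i hi => ?_)
        have hij : i ≤ j := Nat.lt_succ_iff.mp (mem_range.mp hi)
        rw [abs_mul, Nat.abs_cast]
        refine mul_le_mul_of_nonneg_left ?_ (by positivity)
        calc |∑ r ∈ range i, T r| ≤ ∑ r ∈ range i, B :=
              (abs_sum_le_sum_abs _ _).trans
                (sum_le_sum fun r hr => hT r ((mem_range.mp hr).trans_le hij))
          _ = i * B := by rw [sum_const, card_range, nsmul_eq_mul]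
          _ ≤ j * B := by gcongr
    _ = j * 2 ^ j * B := by
        rw [← sum_mul, ← Nat.cast_sum, Nat.sum_range_choose]
        push_cast
        ring

theorem sum_ite_two_pow_mul_lt_le {x u : ℝ} (hx : 0 ≤ x) (hu : 0 ≤ u) (N : ℕ) :
    ∑ n ∈ range N, (if 2 ^ n * x < u then 2 ^ n * x else 0) ≤ 2 * u := by
  induction N with
  | zero => simpa using hu
  | succ N ih =>
    rw [sum_range_succ]
    split_ifs with h
    · have hgeom : ∑ n ∈ range N, (if 2 ^ n * x < u then 2 ^ n * x else 0) ≤ 2 ^ N * x - x :=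
        calc _ ≤ ∑ n ∈ range N, (2 : ℝ) ^ n * x :=
              sum_le_sum fun n _ => by split_ifs <;> first | exact le_rfl | positivity
          _ = 2 ^ N * x - x := by
              rw [← sum_mul, geom_sum_eq (by norm_num : (2 : ℝ) ≠ 1)]
              ring
      linarith
    · simpa using ih

theorem Monotone.integrableOn_div_pow {φ : ℝ → ℝ} (hφ : Monotone φ) {s L : ℝ} (hs : 0 < s)
    (p : ℕ) : IntegrableOn (fun u => φ u / u ^ p) (Set.Ioc s L) := by
  have hinv : ContinuousOn (fun u : ℝ => (u ^ p)⁻¹) (Set.Icc s L) :=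
    (continuousOn_pow p).inv₀ fun u hu => pow_ne_zero _ (hs.trans_le hu.1).ne'
  simpa only [div_eq_mul_inv] using
    (((hφ.monotoneOn _).integrableOn_isCompact isCompact_Icc).mul_continuousOn hinv
      isCompact_Icc).mono_set Set.Ioc_subset_Icc_self

theorem sum_two_pow_mul_setIntegral_le {φ : ℝ → ℝ} (hφ : Monotone φ) (hφ₀ : ∀ u, 0 ≤ φ u)
    {s L : ℝ} (hs : 0 < s) (p N : ℕ) :
    ∑ n ∈ range N, 2 ^ n * s * ∫ u in Set.Ioc (2 ^ n * s) L, φ u / u ^ (p + 1) ≤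
      2 * ∫ u in Set.Ioc s L, φ u / u ^ p := by
  set g : ℝ → ℝ := fun u => φ u / u ^ (p + 1)
  have hind : ∀ n ∈ range N, IntegrableOn
      (fun u => 2 ^ n * s * (Set.Ioi (2 ^ n * s)).indicator g u) (Set.Ioc s L) :=
    fun n _ => ((hφ.integrableOn_div_pow hs (p + 1)).indicator measurableSet_Ioi).const_mul _
  have hrestrict : ∀ n : ℕ, ∫ u in Set.Ioc (2 ^ n * s) L, g u =
      ∫ u in Set.Ioc s L, (Set.Ioi (2 ^ n * s)).indicator g u := fun n => by
    rw [setIntegral_indicator measurableSet_Ioi, Set.Ioc_inter_Ioi,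
      max_eq_right (le_mul_of_one_le_left hs.le (one_le_pow₀ one_le_two))]
  calc ∑ n ∈ range N, 2 ^ n * s * ∫ u in Set.Ioc (2 ^ n * s) L, g u
      = ∫ u in Set.Ioc s L, ∑ n ∈ range N, 2 ^ n * s * (Set.Ioi (2 ^ n * s)).indicator g u := by
        rw [integral_finsetSum _ hind]
        simp only [hrestrict, integral_const_mul]
    _ ≤ ∫ u in Set.Ioc s L, 2 * (φ u / u ^ p) := by
        refine setIntegral_mono_on (integrable_finsetSum _ hind)
          ((hφ.integrableOn_div_pow hs p).const_mul 2) measurableSet_Ioc fun u hu => ?_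
        have hu₀ : 0 < u := hs.trans hu.1
        calc ∑ n ∈ range N, 2 ^ n * s * (Set.Ioi (2 ^ n * s)).indicator g u
            = (∑ n ∈ range N, if 2 ^ n * s < u then 2 ^ n * s else 0) * g u := by
              rw [sum_mul]
              refine sum_congr rfl fun n _ => ?_
              simp only [Set.indicator_apply, Set.mem_Ioi]
              split_ifs <;> simp
          _ ≤ 2 * u * g u := mul_le_mul_of_nonneg_right
              (sum_ite_two_pow_mul_lt_le hs.le hu₀.le N) (div_nonneg (hφ₀ u) (by positivity))
          _ = 2 * (φ u / u ^ p) := by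
              simp only [g]
              field_simp
              ring
    _ = 2 * ∫ u in Set.Ioc s L, φ u / u ^ p := integral_const_mul _ _

theorem sum_div_pow_le_of_le_pow_mul {ω φ : ℝ → ℝ} (hφ : Monotone φ) (hφ₀ : ∀ u, 0 ≤ φ u)
    {j N : ℕ} {c K L s : ℝ} (hs : 0 < s) (hL : 0 ≤ L) (hc : 0 ≤ c) (hK : 0 ≤ K)
    (hω : ∀ v, 0 < v → ω v ≤ c * v ^ (j + 1) * ((∫ u in Set.Ioc v L, φ u / u ^ (j + 2)) + K))
    (hN : ∀ n < N, 2 ^ n * s < L) :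
    ∑ n ∈ range N, ω (2 ^ n * s) / (2 ^ n * s) ^ j ≤
      2 * c * ((∫ u in Set.Ioc s L, φ u / u ^ (j + 1)) + L * K) := by
  have hcount : ∑ n ∈ range N, (2 : ℝ) ^ n * s ≤ 2 * L := by
    refine le_of_eq_of_le (sum_congr rfl fun n hn => ?_) (sum_ite_two_pow_mul_lt_le hs.le hL N)
    rw [if_pos (hN n (mem_range.mp hn))]
  calc ∑ n ∈ range N, ω (2 ^ n * s) / (2 ^ n * s) ^ j
      ≤ ∑ n ∈ range N, c * (2 ^ n * s * (∫ u in Set.Ioc (2 ^ n * s) L, φ u / u ^ (j + 2))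
          + 2 ^ n * s * K) := sum_le_sum fun n _ => by
        have hv : (0 : ℝ) < 2 ^ n * s := by positivity
        refine (div_le_div_of_nonneg_right (hω _ hv) (by positivity)).trans_eq ?_
        field_simp
        ring
    _ = c * (∑ n ∈ range N, 2 ^ n * s * ∫ u in Set.Ioc (2 ^ n * s) L, φ u / u ^ (j + 2))
          + c * (∑ n ∈ range N, (2 : ℝ) ^ n * s) * K := by
        rw [← mul_sum, sum_add_distrib, mul_add, ← sum_mul, mul_assoc]
    _ ≤ c * (2 * ∫ u in Set.Ioc s L, φ u / u ^ (j + 1)) + c * (2 * L) * K := by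
        gcongr
        exact sum_two_pow_mul_setIntegral_le hφ hφ₀ hs (j + 1) N
    _ = 2 * c * ((∫ u in Set.Ioc s L, φ u / u ^ (j + 1)) + L * K) := by ring

theorem Monotone.le_two_pow_mul_setIntegral_div_pow_add {φ : ℝ → ℝ} (hφ : Monotone φ)
    (hφ₀ : ∀ u, 0 ≤ φ u) {B : ℝ} (hB : ∀ u, φ u ≤ B) (j : ℕ) {s L : ℝ} (hs : 0 < s)
    (hL : 0 < L) :
    φ s ≤ 2 ^ (j + 1) * s ^ j * ((∫ u in Set.Ioc s L, φ u / u ^ (j + 1)) + B / L ^ j) := by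
  have hI : 0 ≤ ∫ u in Set.Ioc s L, φ u / u ^ (j + 1) := setIntegral_nonneg measurableSet_Ioc
    fun u hu => div_nonneg (hφ₀ u) (pow_nonneg (hs.trans hu.1).le _)
  have hB₀ : 0 ≤ B := (hφ₀ s).trans (hB s)
  rcases le_or_gt (2 * s) L with h2s | h2s
  · have hlocal : φ s / (2 ^ (j + 1) * s ^ j) ≤ ∫ u in Set.Ioc s L, φ u / u ^ (j + 1) :=
      calc φ s / (2 ^ (j + 1) * s ^ j) = ∫ _ in Set.Ioc s (2 * s), φ s / (2 * s) ^ (j + 1) := by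
            rw [setIntegral_const, Real.volume_real_Ioc_of_le (by linarith), smul_eq_mul]
            field_simp
            ring
        _ ≤ ∫ u in Set.Ioc s (2 * s), φ u / u ^ (j + 1) :=
            setIntegral_mono_on (integrableOn_const measure_Ioc_lt_top.ne)
              (hφ.integrableOn_div_pow hs _) measurableSet_Ioc fun u hu =>
              div_le_div₀ (hφ₀ u) (hφ hu.1.le) (pow_pos (hs.trans hu.1) _)
                (pow_le_pow_left₀ (hs.trans hu.1).le hu.2 _)
        _ ≤ ∫ u in Set.Ioc s L, φ u / u ^ (j + 1) :=
            setIntegral_mono_set (hφ.integrableOn_div_pow hs _)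
              ((ae_restrict_mem measurableSet_Ioc).mono fun u hu =>
                div_nonneg (hφ₀ u) (pow_nonneg (hs.trans hu.1).le _))
              (Set.Ioc_subset_Ioc_right h2s).eventuallyLE
    rw [div_le_iff₀ (by positivity)] at hlocal
    have : 0 ≤ 2 ^ (j + 1) * s ^ j * (B / L ^ j) := by positivity
    linarith
  · calc φ s ≤ B := hB s
      _ ≤ (2 * s) ^ j * (B / L ^ j) := by
          rw [mul_div_assoc', le_div_iff₀ (by positivity)]
          exact (mul_comm B _).trans_le
            (mul_le_mul_of_nonneg_right (pow_le_pow_left₀ hL.le h2s.le j) hB₀)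
      _ ≤ 2 ^ (j + 1) * s ^ j * ((∫ u in Set.Ioc s L, φ u / u ^ (j + 1)) + B / L ^ j) := by
          rw [mul_pow, pow_succ]
          have : 0 ≤ 2 ^ j * s ^ j * (B / L ^ j) := by positivity
          nlinarith [mul_nonneg (by positivity : (0 : ℝ) ≤ 2 ^ j * 2 * s ^ j) hI]

section Modulus

theorem supNorm_nonneg (g : ℝ → ℝ) (a b : ℝ) : 0 ≤ supNorm g a b :=
  Real.sSup_nonneg (by rintro _ ⟨x, -, rfl⟩; exact abs_nonneg _)

theorem smoothOmega_nonneg (j : ℕ) (g : ℝ → ℝ) (t a b : ℝ) : 0 ≤ smoothOmega j g t a b :=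
  Real.sSup_nonneg (by rintro _ ⟨u, x, -, -, rfl⟩; exact abs_nonneg _)

variable {a b : ℝ} {F : ℝ → ℝ}

theorem abs_le_supNorm (hF : ContinuousOn F (Set.Icc a b)) {x : ℝ} (hx : x ∈ Set.Icc a b) :
    |F x| ≤ supNorm F a b := by
  obtain ⟨C, hC⟩ := isCompact_Icc.exists_bound_of_continuousOn hF
  exact le_csSup ⟨C, by rintro _ ⟨y, hy, rfl⟩; simpa using hC y hy⟩ ⟨x, hx, rfl⟩

theorem kSymmDiff_eq_fwdDiff_iter (j : ℕ) (g : ℝ → ℝ) {u y : ℝ} (h₁ : a ≤ y)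
    (h₂ : y + j * u ≤ b) : kSymmDiff j g u (y + j * u / 2) a b = (fwdDiff u)^[j] g y := by
  rw [kSymmDiff, if_pos ⟨by linarith, by linarith⟩, fwdDiff_iter_eq_sum_shift,
    ← sum_range_reflect]
  refine sum_congr rfl fun i hi => ?_
  have hij : i ≤ j := Nat.lt_succ_iff.mp (mem_range.mp hi)
  rw [show j + 1 - 1 - i = j - i by omega, Nat.choose_symm hij, zsmul_eq_mul, nsmul_eq_mul,
    Nat.cast_sub hij]
  push_cast
  ring_nf

theorem abs_kSymmDiff_le (hF : ContinuousOn F (Set.Icc a b)) (j : ℕ) {u : ℝ} (hu : 0 ≤ u)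
    (x : ℝ) : |kSymmDiff j F u x a b| ≤ 2 ^ j * supNorm F a b := by
  rw [kSymmDiff]
  split_ifs with hx
  · calc |∑ i ∈ range (j + 1), (-1) ^ i * (j.choose i : ℝ) * F (x + (j / 2 - i) * u)|
        ≤ ∑ i ∈ range (j + 1), (j.choose i : ℝ) * supNorm F a b := by
          refine (abs_sum_le_sum_abs _ _).trans (sum_le_sum fun i hi => ?_)
          have hij : (i : ℝ) ≤ j := by exact_mod_cast Nat.lt_succ_iff.mp (mem_range.mp hi)
          have hiu : 0 ≤ (i : ℝ) * u := by positivity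
          have hiju : (i : ℝ) * u ≤ j * u := mul_le_mul_of_nonneg_right hij hu
          rw [abs_mul, abs_mul, abs_pow, abs_neg, abs_one, one_pow, one_mul, Nat.abs_cast]
          exact mul_le_mul_of_nonneg_left
            (abs_le_supNorm hF ⟨by nlinarith [hx.1], by nlinarith [hx.2]⟩) (by positivity)
      _ = 2 ^ j * supNorm F a b := by
          rw [← sum_mul, ← Nat.cast_sum, Nat.sum_range_choose, Nat.cast_pow, Nat.cast_two]
  · rw [abs_zero]
    exact mul_nonneg (by positivity) (supNorm_nonneg F a b)

theorem abs_kSymmDiff_le_smoothOmega (hF : ContinuousOn F (Set.Icc a b)) {j : ℕ} {u t : ℝ}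
    (x : ℝ) (hu : 0 < u) (hut : u ≤ t) : |kSymmDiff j F u x a b| ≤ smoothOmega j F t a b :=
  le_csSup ⟨2 ^ j * supNorm F a b, by
    rintro _ ⟨u', x', hu', -, rfl⟩; exact abs_kSymmDiff_le hF j hu'.le x'⟩ ⟨u, x, hu, hut, rfl⟩

theorem smoothOmega_le_two_pow_mul_supNorm (hF : ContinuousOn F (Set.Icc a b)) (j : ℕ)
    (t : ℝ) : smoothOmega j F t a b ≤ 2 ^ j * supNorm F a b :=
  Real.sSup_le (by rintro _ ⟨u, x, hu, -, rfl⟩; exact abs_kSymmDiff_le hF j hu.le x)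
    (mul_nonneg (by positivity) (supNorm_nonneg F a b))

theorem smoothOmega_mono (hF : ContinuousOn F (Set.Icc a b)) (j : ℕ) :
    Monotone fun t => smoothOmega j F t a b := fun _ _ htt' =>
  Real.sSup_le (by
    rintro _ ⟨u, x, hu, hut, rfl⟩; exact abs_kSymmDiff_le_smoothOmega hF x hu (hut.trans htt'))
    (smoothOmega_nonneg ..)

theorem abs_fwdDiff_iter_le_smoothOmega (hF : ContinuousOn F (Set.Icc a b)) {j : ℕ}
    {h s y : ℝ} (hh : h ≠ 0) (hhs : |h| ≤ s) (hy : y ∈ Set.Icc a b)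
    (hy' : y + j * h ∈ Set.Icc a b) : |(fwdDiff h)^[j] F y| ≤ smoothOmega j F s a b := by
  rcases hh.lt_or_gt with hneg | hpos
  · rw [← neg_neg h, fwdDiff_iter_neg, abs_mul, abs_pow, abs_neg, abs_one, one_pow, one_mul,
      ← kSymmDiff_eq_fwdDiff_iter (a := a) (b := b) j F (y := y - j * -h)
        (by linarith [hy'.1]) (by linarith [hy.2])]
    exact abs_kSymmDiff_le_smoothOmega hF _ (neg_pos.mpr hneg) (by rwa [abs_of_neg hneg] at hhs)
  · rw [← kSymmDiff_eq_fwdDiff_iter j F hy.1 hy'.2]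
    exact abs_kSymmDiff_le_smoothOmega hF _ hpos (by rwa [abs_of_pos hpos] at hhs)

theorem two_pow_mul_abs_fwdDiff_iter_le (hF : ContinuousOn F (Set.Icc a b)) {j : ℕ}
    {h s y : ℝ} (hh : h ≠ 0) (hhs : |h| ≤ s) (hy : y ∈ Set.Icc a b)
    (hy' : y + 2 * j * h ∈ Set.Icc a b) :
    2 ^ j * |(fwdDiff h)^[j] F y| ≤
      smoothOmega j F (2 * s) a b + j * 2 ^ j * smoothOmega (j + 1) F s a b := by
  have hmem : ∀ t : ℝ, 0 ≤ t → t ≤ 2 * j → y + t * h ∈ Set.Icc a b := by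
    intro t ht₀ ht₁
    rcases le_total 0 h with hpos | hneg
    · exact ⟨by nlinarith [hy.1], by nlinarith [hy'.2]⟩
    · exact ⟨by nlinarith [hy'.1], by nlinarith [hy.2]⟩
  have hdiff : ∀ r < j, |(fwdDiff h)^[j + 1] F (y + r * h)| ≤ smoothOmega (j + 1) F s a b := by
    intro r hr
    have hr' : (r : ℝ) + 1 ≤ j := by exact_mod_cast hr
    refine abs_fwdDiff_iter_le_smoothOmega hF hh hhs (hmem r (by positivity) (by linarith)) ?_
    rw [add_assoc, ← add_mul, ← Nat.cast_add]
    exact hmem _ (by positivity) (by push_cast; linarith)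
  rw [show (2 : ℝ) ^ j * |(fwdDiff h)^[j] F y| = |2 ^ j * (fwdDiff h)^[j] F y| by
    rw [abs_mul, abs_pow, abs_two], two_pow_mul_fwdDiff_iter]
  refine (abs_sub _ _).trans (add_le_add ?_ ?_)
  · refine abs_fwdDiff_iter_le_smoothOmega hF (mul_ne_zero two_ne_zero hh) ?_ hy ?_
    · rw [abs_mul, abs_two]; linarith
    · convert hy' using 2; ring
  · exact abs_sum_choose_mul_sum_le j _ (smoothOmega_nonneg ..) hdiff

theorem two_pow_mul_smoothOmega_le (hF : ContinuousOn F (Set.Icc a b)) {j : ℕ} {s : ℝ}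
    (h3 : 3 * j * s ≤ b - a) :
    2 ^ j * smoothOmega j F s a b ≤
      smoothOmega j F (2 * s) a b + j * 2 ^ j * smoothOmega (j + 1) F s a b := by
  have hrhs : 0 ≤ smoothOmega j F (2 * s) a b + j * 2 ^ j * smoothOmega (j + 1) F s a b :=
    add_nonneg (smoothOmega_nonneg ..) (mul_nonneg (by positivity) (smoothOmega_nonneg ..))
  rw [← le_div_iff₀' (by positivity)]
  refine Real.sSup_le ?_ (div_nonneg hrhs (by positivity))
  rintro _ ⟨u, x, hu, hus, rfl⟩
  rw [le_div_iff₀' (by positivity)]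
  by_cases hx : a ≤ x - (j / 2 : ℝ) * u ∧ x + (j / 2 : ℝ) * u ≤ b
  swap
  · rwa [kSymmDiff, if_neg hx, abs_zero, mul_zero]
  obtain ⟨y, rfl⟩ : ∃ y, x = y + j * u / 2 := ⟨x - j * u / 2, by ring⟩
  have hy : y ∈ Set.Icc a b := ⟨by linarith [hx.1], by nlinarith [hx.2]⟩
  have hyj : y + j * u ≤ b := by linarith [hx.2]
  have h3u : 3 * j * u ≤ b - a := by nlinarith
  rw [kSymmDiff_eq_fwdDiff_iter j F hy.1 hyj]
  rcases le_or_gt (y + 2 * j * u) b with hright | hleft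
  · exact two_pow_mul_abs_fwdDiff_iter_le hF hu.ne' (by rwa [abs_of_pos hu])
      hy ⟨by nlinarith [hy.1], hright⟩
  · -- not enough room to the right: run the differences backwards from `y + j u`
    have hback : |(fwdDiff u)^[j] F y| = |(fwdDiff (-u))^[j] F (y + j * u)| := by
      rw [fwdDiff_iter_neg, abs_mul, abs_pow, abs_neg, abs_one, one_pow, one_mul,
        add_sub_cancel_right]
    rw [hback]
    exact two_pow_mul_abs_fwdDiff_iter_le hF (neg_ne_zero.mpr hu.ne')
      (by rwa [abs_neg, abs_of_pos hu]) ⟨by nlinarith [hy.1], hyj⟩ ⟨by linarith, by nlinarith⟩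

theorem smoothOmega_div_pow_le_add_sum (hF : ContinuousOn F (Set.Icc a b)) {j N : ℕ} {s : ℝ}
    (hs : 0 < s) (hN : ∀ n < N, 3 * j * (2 ^ n * s) ≤ b - a) :
    smoothOmega j F s a b / s ^ j ≤ smoothOmega j F (2 ^ N * s) a b / (2 ^ N * s) ^ j +
      j * ∑ n ∈ range N, smoothOmega (j + 1) F (2 ^ n * s) a b / (2 ^ n * s) ^ j := by
  set ψ : ℕ → ℝ := fun n => smoothOmega j F (2 ^ n * s) a b / (2 ^ n * s) ^ j
  have hstep : ∀ n ∈ range N,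
      ψ n - ψ (n + 1) ≤ j * (smoothOmega (j + 1) F (2 ^ n * s) a b / (2 ^ n * s) ^ j) := by
    intro n hn
    have hv : 0 < 2 ^ n * s := by positivity
    have hdouble := two_pow_mul_smoothOmega_le hF (hN n (mem_range.mp hn))
    calc ψ n - ψ (n + 1)
        = (2 ^ j * smoothOmega j F (2 ^ n * s) a b - smoothOmega j F (2 * (2 ^ n * s)) a b) /
            (2 ^ j * (2 ^ n * s) ^ j) := by
          simp only [ψ]
          rw [show (2 : ℝ) ^ (n + 1) * s = 2 * (2 ^ n * s) by ring]
          field_simp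
          ring
      _ ≤ j * 2 ^ j * smoothOmega (j + 1) F (2 ^ n * s) a b / (2 ^ j * (2 ^ n * s) ^ j) := by
          gcongr
          linarith
      _ = j * (smoothOmega (j + 1) F (2 ^ n * s) a b / (2 ^ n * s) ^ j) := by
          field_simp
  have := sum_le_sum hstep
  rw [sum_range_sub', ← mul_sum] at this
  simp only [ψ, pow_zero, one_mul] at this
  linarith

theorem smoothOmega_div_pow_le_of_lt (hab : a < b) (hF : ContinuousOn F (Set.Icc a b)) {j : ℕ}
    {v : ℝ} (hv : b - a < 3 * j * v) :
    smoothOmega j F v a b / v ^ j ≤ (6 * j) ^ j * (supNorm F a b / (b - a) ^ j) := by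
  have hL : 0 < b - a := sub_pos.mpr hab
  have hjv : 0 < 3 * j * v := hL.trans hv
  obtain ⟨hj, hv0⟩ : 0 < 3 * (j : ℝ) ∧ 0 < v := by
    rcases pos_and_pos_or_neg_and_neg_of_mul_pos hjv with h | ⟨h, -⟩
    · exact h
    · exact absurd h (not_lt.mpr (by positivity))
  calc smoothOmega j F v a b / v ^ j
      ≤ 2 ^ j * supNorm F a b / ((b - a) / (3 * j)) ^ j := by
        gcongr
        · exact mul_nonneg (by positivity) (supNorm_nonneg F a b)
        · exact smoothOmega_le_two_pow_mul_supNorm hF j v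
        · rw [div_le_iff₀ (by positivity)]; linarith
    _ = (6 * j) ^ j * (supNorm F a b / (b - a) ^ j) := by
        rw [div_pow, show (6 * j : ℝ) = 2 * 3 * j by ring]
        field_simp
        rw [mul_pow, mul_pow]
        ring

end Modulus

section Marchaud

-- `n = 0` is the constant of `Monotone.le_two_pow_mul_setIntegral_div_pow_add` for `ω_j`,
-- `n + 1` the one of `smoothOmega_le_of_succ`.
noncomputable def marchaudConst : ℕ → ℕ → ℝ
  | j, 0 => 2 ^ (2 * j + 1)
  | j, n + 1 => (6 * j) ^ j + 2 * j * marchaudConst (j + 1) n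

theorem marchaudConst_pos (j n : ℕ) : 0 < marchaudConst j n := by
  induction n generalizing j with
  | zero => exact pow_pos (two_pos : (0 : ℝ) < 2) _
  | succ n ih =>
    rcases Nat.eq_zero_or_pos j with rfl | hj
    · simp [marchaudConst]
    · exact add_pos_of_pos_of_nonneg (by positivity) (mul_nonneg (by positivity) (ih _).le)

variable {a b : ℝ} {F : ℝ → ℝ}

theorem smoothOmega_le_of_succ (hab : a < b) (hF : ContinuousOn F (Set.Icc a b)) {j k : ℕ}
    {c : ℝ} (hj : 1 ≤ j) (hc : 0 ≤ c)
    (hsucc : ∀ v, 0 < v → smoothOmega (j + 1) F v a b ≤ c * v ^ (j + 1) *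
      ((∫ u in Set.Ioc v (b - a), smoothOmega k F u a b / u ^ (j + 2)) +
        supNorm F a b / (b - a) ^ (j + 1)))
    {s : ℝ} (hs : 0 < s) :
    smoothOmega j F s a b ≤ ((6 * j) ^ j + 2 * j * c) * s ^ j *
      ((∫ u in Set.Ioc s (b - a), smoothOmega k F u a b / u ^ (j + 1)) +
        supNorm F a b / (b - a) ^ j) := by
  set L := b - a
  set M := supNorm F a b
  set I := ∫ u in Set.Ioc s L, smoothOmega k F u a b / u ^ (j + 1)
  have hL : 0 < L := sub_pos.mpr hab
  have hj' : (1 : ℝ) ≤ j := by exact_mod_cast hj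
  have hscale : ∃ N : ℕ, L < 3 * j * (2 ^ N * s) := by
    obtain ⟨N, hN⟩ := pow_unbounded_of_one_lt (L / s) one_lt_two
    exact ⟨N, by rw [div_lt_iff₀ hs] at hN; nlinarith [pow_pos (two_pos : (0 : ℝ) < 2) N]⟩
  have hbelow : ∀ n < Nat.find hscale, 3 * j * (2 ^ n * s) ≤ L :=
    fun n hn => not_lt.mp (Nat.find_min hscale hn)
  have htop := smoothOmega_div_pow_le_of_lt hab hF (Nat.find_spec hscale)
  have hsum : ∑ n ∈ range (Nat.find hscale),
      smoothOmega (j + 1) F (2 ^ n * s) a b / (2 ^ n * s) ^ j ≤ 2 * c * (I + M / L ^ j) := by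
    have := sum_div_pow_le_of_le_pow_mul (smoothOmega_mono hF k) (smoothOmega_nonneg k F · a b)
      hs hL.le hc (div_nonneg (supNorm_nonneg F a b) (by positivity)) hsucc
      fun n hn => by nlinarith [hbelow n hn, pow_pos (two_pos : (0 : ℝ) < 2) n]
    rwa [pow_succ, ← div_div, mul_div_cancel₀ _ hL.ne'] at this
  have hI : 0 ≤ I := setIntegral_nonneg measurableSet_Ioc fun u hu =>
    div_nonneg (smoothOmega_nonneg ..) (pow_nonneg (hs.trans hu.1).le _)
  have hdiv := smoothOmega_div_pow_le_add_sum hF hs hbelow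
  rw [div_le_iff₀ (by positivity)] at hdiv
  calc smoothOmega j F s a b ≤ _ := hdiv
    _ ≤ ((6 * j) ^ j * (M / L ^ j) + j * (2 * c * (I + M / L ^ j))) * s ^ j := by gcongr
    _ ≤ ((6 * j) ^ j + 2 * j * c) * s ^ j * (I + M / L ^ j) := by
        have : 0 ≤ (6 * j : ℝ) ^ j * s ^ j * I := by positivity
        linarith

theorem smoothOmega_le_marchaudConst (hab : a < b) (hF : ContinuousOn F (Set.Icc a b))
    (n : ℕ) {j : ℕ} (hj : 1 ≤ j) {s : ℝ} (hs : 0 < s) :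
    smoothOmega j F s a b ≤ marchaudConst j n * s ^ j *
      ((∫ u in Set.Ioc s (b - a), smoothOmega (j + n) F u a b / u ^ (j + 1)) +
        supNorm F a b / (b - a) ^ j) := by
  induction n generalizing j s with
  | zero =>
    have hL : 0 < b - a := sub_pos.mpr hab
    have hI : 0 ≤ ∫ u in Set.Ioc s (b - a), smoothOmega j F u a b / u ^ (j + 1) :=
      setIntegral_nonneg measurableSet_Ioc fun u hu =>
        div_nonneg (smoothOmega_nonneg ..) (pow_nonneg (hs.trans hu.1).le _)
    have hbase := (smoothOmega_mono hF j).le_two_pow_mul_setIntegral_div_pow_add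
      (smoothOmega_nonneg j F · a b) (smoothOmega_le_two_pow_mul_supNorm hF j) j hs hL
    calc smoothOmega j F s a b
        ≤ 2 ^ (j + 1) * s ^ j * ((∫ u in Set.Ioc s (b - a), smoothOmega j F u a b / u ^ (j + 1))
          + 2 ^ j * supNorm F a b / (b - a) ^ j) := hbase
      _ ≤ 2 ^ (j + 1) * s ^ j * (2 ^ j * (∫ u in Set.Ioc s (b - a),
            smoothOmega j F u a b / u ^ (j + 1)) + 2 ^ j * (supNorm F a b / (b - a) ^ j)) := by
          rw [mul_div_assoc]
          gcongr
          exact le_mul_of_one_le_left hI (one_le_pow₀ one_le_two)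
      _ = _ := by
          simp only [marchaudConst, add_zero]
          ring
  | succ n ih =>
    refine smoothOmega_le_of_succ hab hF hj (marchaudConst_pos (j + 1) n).le (fun v hv => ?_) hs
    rw [show j + (n + 1) = j + 1 + n by omega]
    exact ih (by omega) hv

end Marchaud

/-- the Marchaud inequality. -/
theorem stmt12 (k l : ℕ) (hl : 1 ≤ l) (hlk : l < k) :
    ∃ c : ℝ, 0 < c ∧ ∀ a b : ℝ, a < b → ∀ F : ℝ → ℝ, ContinuousOn F (Set.Icc a b) →
      ∀ t : ℝ, 0 < t → t ≤ b - a →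
        smoothOmega l F t a b ≤
          c * t ^ l *
            ((∫ u in Set.Ioc t (b - a), smoothOmega k F u a b / u ^ (l + 1)) +
              supNorm F a b / (b - a) ^ l) := by
  refine ⟨marchaudConst l (k - l), marchaudConst_pos l (k - l), fun a b hab F hF t ht _ => ?_⟩
  simpa only [Nat.add_sub_cancel' hlk.le] using
    smoothOmega_le_marchaudConst hab hF (k - l) hl ht
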